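/- For every real number z with |z| < 1, the series ∑_{k=0}^{∞} (k·(2k−1)!!/(2^{k+1} · (k+1)!)) · z^{k+1} converges and its sum equals (2 − 2√(1−z) − z)/(2√(1−z)). -/

import Mathlib

/-- The odd double factorial: `oddDF k = (2k-1)!! = 1 * 3 * ⋯ * (2k-1)`,
with the convention `oddDF 0 = (-1)!! = 1`. -/
def oddDF (k : ℕ) : ℕ := ∏ i ∈ Finset.range k, (2 * i + 1)


noncomputable def gsA (k : ℕ) : ℝ := (oddDF k : ℝ) / (2 ^ k * Nat.factorial k)

noncomputable def gsB (k : ℕ) : ℝ := gsA k / (2 * (k + 1))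

lemma oddDF_succ (k : ℕ) : oddDF (k + 1) = oddDF k * (2 * k + 1) :=
  Finset.prod_range_succ _ _

lemma oddDF_le (k : ℕ) : oddDF k ≤ 2 ^ k * Nat.factorial k := by
  induction k with
  | zero => simp [oddDF]
  | succ n ih =>
      rw [oddDF_succ]
      calc oddDF n * (2 * n + 1) ≤ (2 ^ n * n.factorial) * (2 * (n + 1)) :=
            Nat.mul_le_mul ih (by omega)
        _ = 2 ^ (n + 1) * (n + 1).factorial := by rw [Nat.factorial_succ]; ring

lemma oddDF_pos (k : ℕ) : 0 < oddDF k := Finset.prod_pos fun i _ => by omega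

lemma gsA_pos (k : ℕ) : 0 < gsA k := by
  apply div_pos
  · exact_mod_cast oddDF_pos k
  · positivity

lemma gsA_le_one (k : ℕ) : gsA k ≤ 1 := by
  rw [gsA, div_le_one (by positivity)]
  exact_mod_cast oddDF_le k

lemma gsA_rec (k : ℕ) : gsA (k + 1) * (2 * ((k : ℝ) + 1)) = gsA k * (2 * k + 1) := by
  have h1 : (Nat.factorial (k + 1) : ℝ) = (k + 1) * Nat.factorial k := by
    exact_mod_cast Nat.factorial_succ k
  have h2 : (oddDF (k + 1) : ℝ) = oddDF k * (2 * k + 1) := by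
    push_cast [oddDF_succ k]; ring
  have hk : (0 : ℝ) < Nat.factorial k := by exact_mod_cast Nat.factorial_pos k
  have hk1 : (0 : ℝ) < (k : ℝ) + 1 := by positivity
  rw [gsA, gsA, h1, h2, pow_succ]
  field_simp

lemma gsB_coeff (k : ℕ) :
    gsB k = (oddDF k : ℝ) / (2 ^ (k + 1) * Nat.factorial (k + 1)) := by
  have h1 : (Nat.factorial (k + 1) : ℝ) = (k + 1) * Nat.factorial k := by
    exact_mod_cast Nat.factorial_succ k
  have hk : (0 : ℝ) < Nat.factorial k := by exact_mod_cast Nat.factorial_pos k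
  have hk1 : (0 : ℝ) < (k : ℝ) + 1 := by positivity
  rw [gsB, gsA, h1, pow_succ]
  rw [div_div, div_eq_div_iff (by positivity) (by positivity)]
  ring

lemma gsA_summable {x : ℝ} (hx : |x| < 1) :
    Summable fun k : ℕ => gsA k * x ^ k := by
  have hg : Summable fun k : ℕ => |x| ^ k :=
    summable_geometric_of_lt_one (abs_nonneg x) hx
  refine Summable.of_norm_bounded hg fun k => ?_
  rw [Real.norm_eq_abs, abs_mul, abs_pow]
  calc |gsA k| * |x| ^ k ≤ 1 * |x| ^ k := by
        gcongr
        rw [abs_of_pos (gsA_pos k)]; exact gsA_le_one k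
    _ = |x| ^ k := one_mul _

lemma gs_summable_mul {x : ℝ} (hx : |x| < 1) (c : ℕ → ℝ)
    (hc : ∀ k, |c k| ≤ 2 * (k : ℝ) + 1) :
    Summable fun k : ℕ => c k * (gsA k * x ^ k) := by
  have hxn : ‖|x|‖ < 1 := by rwa [Real.norm_eq_abs, abs_abs]
  have h1 : Summable fun k : ℕ => (k : ℝ) * |x| ^ k := by
    simpa using summable_pow_mul_geometric_of_norm_lt_one 1 hxn
  have h2 : Summable fun k : ℕ => |x| ^ k := summable_geometric_of_norm_lt_one hxn
  have hmaj : Summable fun k : ℕ => (2 * (k : ℝ) + 1) * |x| ^ k :=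
    ((h1.mul_left 2).add h2).congr fun k => by ring
  refine Summable.of_norm_bounded hmaj fun k => ?_
  rw [Real.norm_eq_abs, abs_mul, abs_mul, abs_pow]
  have hb1 : |gsA k| * |x| ^ k ≤ 1 * |x| ^ k := by
    gcongr
    rw [abs_of_pos (gsA_pos k)]; exact gsA_le_one k
  calc |c k| * (|gsA k| * |x| ^ k) ≤ (2 * (k : ℝ) + 1) * (1 * |x| ^ k) :=
        mul_le_mul (hc k) hb1 (by positivity) (by positivity)
    _ = (2 * (k : ℝ) + 1) * |x| ^ k := by ring

/-- For `|z| < 1`, the series `∑_{k≥0} (k (2k−1)!!/(2^{k+1} (k+1)!)) z^{k+1}` converges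
with sum `(2 − 2√(1−z) − z)/(2√(1−z))`. -/
theorem generating_series_two (z : ℝ) (hz : |z| < 1) :
    HasSum (fun k : ℕ =>
        (k : ℝ) * (oddDF k : ℝ) / (2 ^ (k + 1) * Nat.factorial (k + 1)) * z ^ (k + 1))
      ((2 - 2 * Real.sqrt (1 - z) - z) / (2 * Real.sqrt (1 - z))) := by
  set r : ℝ := (1 + |z|) / 2 with hr_def
  have habs : 0 ≤ |z| := abs_nonneg z
  have hr0 : 0 < r := by positivity
  have hzr : |z| < r := by rw [hr_def]; linarith
  have hr1 : r < 1 := by rw [hr_def]; linarith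
  set t : Set ℝ := Metric.ball (0 : ℝ) r with ht_def
  have hmem : ∀ y ∈ t, |y| < r := by
    intro y hy
    rw [ht_def, Metric.mem_ball, Real.dist_eq, sub_zero] at hy
    exact hy
  have hmem' : ∀ y ∈ t, |y| < 1 := fun y hy => (hmem y hy).trans hr1
  have h0t : (0 : ℝ) ∈ t := Metric.mem_ball_self hr0
  have hzt : z ∈ t := by rw [ht_def, Metric.mem_ball, Real.dist_eq, sub_zero]; exact hzr
  have hlt1 : ∀ y ∈ t, y < 1 := fun y hy => lt_of_le_of_lt (le_abs_self y) (hmem' y hy)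
  have hrn : ‖r‖ < 1 := by rw [Real.norm_eq_abs, abs_of_pos hr0]; exact hr1
  -- summable bound for derivatives of F
  have hu1 : Summable fun k : ℕ => ((k : ℝ) + 1) * r ^ k := by
    have h1 : Summable fun k : ℕ => (k : ℝ) * r ^ k := by
      simpa using summable_pow_mul_geometric_of_norm_lt_one 1 hrn
    have h2 : Summable fun k : ℕ => r ^ k := summable_geometric_of_norm_lt_one hrn
    exact (h1.add h2).congr fun k => by ring
  have hu : Summable fun k : ℕ => (k : ℝ) * r ^ (k - 1) := by
    apply (summable_nat_add_iff 1).mp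
    refine hu1.congr fun n => ?_
    push_cast
    simp
  -- derivative bounds for F
  have hbound : ∀ (k : ℕ), ∀ y ∈ t, ‖gsA k * ((k : ℝ) * y ^ (k - 1))‖ ≤ (k : ℝ) * r ^ (k - 1) := by
    intro k y hy
    rw [Real.norm_eq_abs, abs_mul, abs_mul, abs_pow, Nat.abs_cast]
    calc |gsA k| * ((k : ℝ) * |y| ^ (k - 1)) ≤ 1 * ((k : ℝ) * r ^ (k - 1)) := by
          gcongr
          · rw [abs_of_pos (gsA_pos k)]; exact gsA_le_one k
          · exact (hmem y hy).le
      _ = (k : ℝ) * r ^ (k - 1) := one_mul _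
  have hF : ∀ y ∈ t, HasDerivAt (fun x => ∑' k, gsA k * x ^ k)
      (∑' k, gsA k * ((k : ℝ) * y ^ (k - 1))) y := by
    intro y hy
    exact hasDerivAt_tsum_of_isPreconnected hu Metric.isOpen_ball
      (convex_ball (0:ℝ) r).isPreconnected
      (fun k x _ => (hasDerivAt_pow k x).const_mul (gsA k))
      hbound h0t (gsA_summable (by simp)) hy
  -- the ODE identity : 2(1-y) F' = F
  have key : ∀ y ∈ t, ∑' k, gsA k * ((k : ℝ) * y ^ (k - 1))
      = (∑' k, gsA k * y ^ k) / (2 * (1 - y)) := by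
    intro y hy
    have hy1 : |y| < 1 := hmem' y hy
    have hyne : (1 : ℝ) - y ≠ 0 := by have := hlt1 y hy; linarith
    have hD : Summable fun k => gsA k * ((k : ℝ) * y ^ (k - 1)) :=
      Summable.of_norm_bounded hu fun k => hbound k y hy
    have h1 : Summable fun k : ℕ => (2 * (k : ℝ) + 1) * (gsA k * y ^ k) :=
      gs_summable_mul hy1 _ fun k => by
        rw [abs_of_pos (by positivity : (0:ℝ) < 2 * (k:ℝ) + 1)]
    have h2 : Summable fun k : ℕ => 2 * (k : ℝ) * (gsA k * y ^ k) :=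
      gs_summable_mul hy1 _ fun k => by
        rw [abs_of_nonneg (by positivity : (0:ℝ) ≤ 2 * (k:ℝ))]; linarith
    rw [eq_div_iff (mul_ne_zero two_ne_zero hyne)]
    have e1 : ∑' k, 2 * (gsA k * ((k : ℝ) * y ^ (k - 1)))
          = ∑' k : ℕ, (2 * (k : ℝ) + 1) * (gsA k * y ^ k) := by
        rw [Summable.tsum_eq_zero_add (hD.mul_left 2)]
        simp only [Nat.cast_zero, zero_mul, mul_zero, zero_add]
        refine tsum_congr fun n => ?_
        have hrec := gsA_rec n
        have : (n + 1 : ℕ) - 1 = n := rfl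
        push_cast [this]
        linear_combination y ^ n * hrec
    have e2 : ∑' k, (2 * y) * (gsA k * ((k : ℝ) * y ^ (k - 1)))
          = ∑' k : ℕ, 2 * (k : ℝ) * (gsA k * y ^ k) := by
      refine tsum_congr fun k => ?_
      cases k with
      | zero => simp
      | succ n =>
          have : (n + 1 : ℕ) - 1 = n := rfl
          rw [this, pow_succ]
          push_cast
          ring
    have eS : ∑' k, gsA k * y ^ k
          = ∑' k : ℕ, ((2 * (k : ℝ) + 1) * (gsA k * y ^ k) - 2 * (k : ℝ) * (gsA k * y ^ k)) :=
      tsum_congr fun k => by ring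
    rw [eS, Summable.tsum_sub h1 h2, ← e1, ← e2, tsum_mul_left, tsum_mul_left]
    ring
  -- sqrt facts
  have hsqrt_pos : ∀ y ∈ t, 0 < Real.sqrt (1 - y) := fun y hy =>
    Real.sqrt_pos.mpr (by have := hlt1 y hy; linarith)
  have hsqrt_deriv : ∀ y ∈ t,
      HasDerivAt (fun x => Real.sqrt (1 - x)) (-(1 / (2 * Real.sqrt (1 - y)))) y := by
    intro y hy
    have hne : (1 : ℝ) - y ≠ 0 := by have := hlt1 y hy; linarith
    have h := (Real.hasDerivAt_sqrt hne).comp y ((hasDerivAt_const y (1:ℝ)).sub (hasDerivAt_id y))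
    refine h.congr_deriv (Eq.symm ?_)
    simp
  -- constancy helper
  have hconst : ∀ f : ℝ → ℝ, (∀ y ∈ t, HasDerivAt f 0 y) → ∀ x ∈ t, f x = f 0 := by
    intro f hf x hx
    have h := Convex.norm_image_sub_le_of_norm_hasDerivWithin_le (C := 0)
      (f' := fun _ => (0 : ℝ)) (fun y hy => (hf y hy).hasDerivWithinAt)
      (fun y _ => by simp) (convex_ball 0 r) h0t hx
    rw [zero_mul] at h
    have := norm_le_zero_iff.mp h
    exact sub_eq_zero.mp this
  -- value of F
  have hPhi : ∀ y ∈ t, HasDerivAt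
      (fun x => (∑' k, gsA k * x ^ k) * Real.sqrt (1 - x)) 0 y := by
    intro y hy
    have h := (hF y hy).mul (hsqrt_deriv y hy)
    refine h.congr_deriv (Eq.symm ?_)
    rw [key y hy]
    have hsp := hsqrt_pos y hy
    have hsq : Real.sqrt (1 - y) ^ 2 = 1 - y := Real.sq_sqrt (by have := hlt1 y hy; linarith)
    have hne : (1 : ℝ) - y ≠ 0 := by have := hlt1 y hy; linarith
    field_simp
    linear_combination (-(∑' k : ℕ, gsA k * y ^ k)) * hsq
  have F0 : (∑' k : ℕ, gsA k * (0:ℝ) ^ k) = 1 := by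
    rw [tsum_eq_single 0 (fun k hk => by simp [zero_pow hk])]
    simp [gsA, oddDF]
  have Fval : ∀ x ∈ t, ∑' k : ℕ, gsA k * x ^ k = 1 / Real.sqrt (1 - x) := by
    intro x hx
    have h := hconst _ hPhi x hx
    rw [F0] at h
    simp only [sub_zero, Real.sqrt_one, one_mul, mul_one] at h
    rw [eq_div_iff (ne_of_gt (hsqrt_pos x hx))]
    exact h
  -- the integrated series H
  have hu2 : Summable fun k : ℕ => r ^ k := summable_geometric_of_norm_lt_one hrn
  have hB : ∀ k : ℕ, gsB k * ((k : ℝ) + 1) = gsA k / 2 := by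
    intro k
    rw [gsB]
    have : ((k : ℝ) + 1) ≠ 0 := by positivity
    field_simp
  have hderivB : ∀ (k : ℕ) (y : ℝ), HasDerivAt (fun x => gsB k * x ^ (k + 1))
      (gsA k / 2 * y ^ k) y := by
    intro k y
    have h := (hasDerivAt_pow (k + 1) y).const_mul (gsB k)
    refine h.congr_deriv (Eq.symm ?_)
    have hkk : (k + 1 : ℕ) - 1 = k := rfl
    rw [hkk]
    push_cast
    linear_combination (-(y ^ k)) * hB k
  have hbound2 : ∀ (k : ℕ), ∀ y ∈ t, ‖gsA k / 2 * y ^ k‖ ≤ r ^ k := by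
    intro k y hy
    rw [Real.norm_eq_abs, abs_mul, abs_pow]
    calc |gsA k / 2| * |y| ^ k ≤ 1 * r ^ k := by
          gcongr
          · rw [abs_of_pos (div_pos (gsA_pos k) two_pos)]
            linarith [gsA_le_one k]
          · exact (hmem y hy).le
      _ = r ^ k := one_mul _
  have hsum20 : Summable fun k : ℕ => gsB k * (0:ℝ) ^ (k + 1) :=
    summable_zero.congr fun k => by simp
  have hH : ∀ y ∈ t, HasDerivAt (fun x => ∑' k, gsB k * x ^ (k + 1))
      (∑' k : ℕ, gsA k / 2 * y ^ k) y := by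
    intro y hy
    exact hasDerivAt_tsum_of_isPreconnected hu2 Metric.isOpen_ball
      (convex_ball (0:ℝ) r).isPreconnected
      (fun k x _ => hderivB k x) hbound2 h0t hsum20 hy
  have hHd : ∀ y ∈ t, ∑' k : ℕ, gsA k / 2 * y ^ k = 1 / (2 * Real.sqrt (1 - y)) := by
    intro y hy
    have e : ∑' k : ℕ, gsA k / 2 * y ^ k = ∑' k : ℕ, (gsA k * y ^ k) * (1/2) :=
      tsum_congr fun k => by ring
    rw [e, tsum_mul_right, Fval y hy]
    rw [div_mul_div_comm, one_mul, mul_comm]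
  have hPsi : ∀ y ∈ t, HasDerivAt
      (fun x => (∑' k, gsB k * x ^ (k + 1)) - (1 - Real.sqrt (1 - x))) 0 y := by
    intro y hy
    have h := (hH y hy).sub ((hasDerivAt_const y (1:ℝ)).sub (hsqrt_deriv y hy))
    refine h.congr_deriv (Eq.symm ?_)
    rw [hHd y hy]
    ring
  have Hval : ∑' k : ℕ, gsB k * z ^ (k + 1) = 1 - Real.sqrt (1 - z) := by
    have h := hconst _ hPsi z hzt
    have H0 : ∑' k : ℕ, gsB k * (0:ℝ) ^ (k + 1) = 0 := by
      rw [tsum_congr (fun k : ℕ => by simp : ∀ k : ℕ, gsB k * (0:ℝ) ^ (k + 1) = 0)]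
      exact tsum_zero
    rw [H0] at h
    simp only [sub_zero, Real.sqrt_one] at h
    linarith [h]
  -- assembly
  have hz1 : z < 1 := lt_of_le_of_lt (le_abs_self z) hz
  have hsp := hsqrt_pos z hzt
  have hsq : Real.sqrt (1 - z) ^ 2 = 1 - z := Real.sq_sqrt (by linarith)
  have hSz : HasSum (fun k : ℕ => gsA k * z ^ k) (1 / Real.sqrt (1 - z)) := by
    have h := (gsA_summable hz).hasSum
    rwa [Fval z hzt] at h
  have hsummB : Summable fun k : ℕ => gsB k * z ^ (k + 1) := by
    have hmaj : Summable fun k : ℕ => |z| * |z| ^ k :=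
      (summable_geometric_of_lt_one (abs_nonneg z) hz).mul_left |z|
    refine Summable.of_norm_bounded hmaj fun k => ?_
    rw [Real.norm_eq_abs, abs_mul, abs_pow, pow_succ]
    have hgB : 0 < gsB k := by
      rw [gsB]; exact div_pos (gsA_pos k) (by positivity)
    have hgB1 : gsB k ≤ 1 := by
      have h1 : gsB k ≤ gsA k := by
        rw [gsB]
        refine div_le_self (gsA_pos k).le ?_
        have : (0:ℝ) ≤ (k:ℝ) := Nat.cast_nonneg k
        linarith
      exact h1.trans (gsA_le_one k)
    calc |gsB k| * (|z| ^ k * |z|) ≤ 1 * (|z| ^ k * |z|) := by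
          gcongr
          rw [abs_of_pos hgB]; exact hgB1
      _ = |z| * |z| ^ k := by ring
  have hHz : HasSum (fun k : ℕ => gsB k * z ^ (k + 1)) (1 - Real.sqrt (1 - z)) := by
    have h := hsummB.hasSum
    rwa [Hval] at h
  have final := (hSz.mul_right (z / 2)).sub hHz
  have hfun : (fun k : ℕ =>
      (k : ℝ) * (oddDF k : ℝ) / (2 ^ (k + 1) * Nat.factorial (k + 1)) * z ^ (k + 1))
      = fun k : ℕ => gsA k * z ^ k * (z / 2) - gsB k * z ^ (k + 1) := by
    funext k
    rw [mul_div_assoc, ← gsB_coeff]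
    linear_combination (z ^ (k + 1)) * hB k
  have hval : (2 - 2 * Real.sqrt (1 - z) - z) / (2 * Real.sqrt (1 - z))
      = 1 / Real.sqrt (1 - z) * (z / 2) - (1 - Real.sqrt (1 - z)) := by
    have hne : Real.sqrt (1 - z) ≠ 0 := ne_of_gt hsp
    field_simp
    linear_combination (-2) * hsq
  rw [hfun, hval]
  exact final
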